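/- arXiv:2106.10054 — 3 statements merged into one kernel-verified Lean document; each statement's English description precedes it below -/
import Mathlib

section
/- Let α be irrational with convergents p_n/q_n. If B ⊂ [0,1) is an interval (arc of the torus) of length β, N is an integer with q_n < N ≤ q_{n+1}, and the sets B, B+α, ..., B+(N-1)α (mod 1) are pairwise disjoint, then β ≤ ‖q_n α‖. -/
/-!
Since `q n < N`, the arcs `B` and `B + q n α` are disjoint. Modulo one, `q n α` is congruent to
`d := q n α - round (q n α)` with `|d| = ‖q n α‖`, so `B + q n α` is the arc `B` shifted by `d`;
two arcs of length `β` whose starting points are less than `β` apart meet, hence `‖q n α‖ ≥ β`.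
-/

open Filter Topology

/-- The denominator `q n` of the `n`-th convergent of the continued fraction of `α`. -/
noncomputable def qd (α : ℝ) (n : ℕ) : ℝ := (GenContFract.of α).dens n

/-- The distance from `x` to the nearest integer. -/
noncomputable def nint (x : ℝ) : ℝ := |x - round x|

/-- The arc of the torus `ℝ/ℤ` which is the image of `[c, c+β)`. -/
noncomputable def arc (c β : ℝ) : Set (AddCircle (1 : ℝ)) :=
  (fun x : ℝ => (x : AddCircle (1 : ℝ))) '' Set.Ico c (c + β)

namespace GenContFract

open GenContFract (of)

variable {K : Type*} [Field K] [LinearOrder K] [FloorRing K]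

theorem exists_int_eq_contsAux_b (v : K) (n : ℕ) : ∃ z : ℤ, ((of v).contsAux n).b = z := by
  induction n using Nat.twoStepInduction with
  | zero => exact ⟨0, by simp [contsAux]⟩
  | one => exact ⟨1, by simp [contsAux]⟩
  | more n ih₀ ih₁ =>
    rcases hs : (of v).s.get? n with _ | gp
    · rw [contsAux_stable_step_of_terminated hs]
      exact ih₁
    · obtain ⟨ha, z, hb⟩ := of_partNum_eq_one_and_exists_int_partDen_eq hs
      obtain ⟨z₀, h₀⟩ := ih₀
      obtain ⟨z₁, h₁⟩ := ih₁
      refine ⟨z * z₁ + z₀, ?_⟩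
      rw [contsAux_recurrence hs rfl rfl, ha, hb, h₀, h₁]
      push_cast
      ring

theorem one_le_dens [IsStrictOrderedRing K] (v : K) (n : ℕ) : 1 ≤ (of v).dens n := by
  induction n with
  | zero => simp [zeroth_den_eq_one]
  | succ n ih => exact ih.trans of_den_mono

theorem exists_nat_eq_dens [IsStrictOrderedRing K] (v : K) (n : ℕ) :
    ∃ m : ℕ, (of v).dens n = m := by
  obtain ⟨z, hz⟩ := exists_int_eq_contsAux_b v (n + 1)
  rw [← nth_cont_eq_succ_nth_contAux, ← den_eq_conts_b] at hz
  have hz₀ : 0 ≤ z := by exact_mod_cast hz ▸ zero_le_of_den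
  lift z to ℕ using hz₀
  exact ⟨z, mod_cast hz⟩

end GenContFract

theorem image_add_arc (c β t : ℝ) :
    (· + (t : AddCircle (1 : ℝ))) '' arc c β = arc (c + t) β := by
  rw [arc, arc, Set.image_image, add_right_comm, ← Set.image_add_const_Ico, Set.image_image]
  simp only [AddCircle.coe_add]

theorem arc_add_int (c β : ℝ) (r : ℤ) : arc (c + r) β = arc c β := by
  have hr : ((r : ℝ) : AddCircle (1 : ℝ)) = 0 :=
    (AddCircle.coe_eq_zero_iff _).mpr ⟨r, by simp⟩
  rw [← image_add_arc, hr]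
  simp

theorem not_disjoint_arc_of_abs_sub_lt {c c' β : ℝ} (h : |c - c'| < β) :
    ¬ Disjoint (arc c β) (arc c' β) := by
  have mem_arc : ∀ {a b : ℝ}, |a - b| < β → ((max a b : ℝ) : AddCircle (1 : ℝ)) ∈ arc a β :=
    fun {a b} hab => ⟨max a b, ⟨le_max_left a b, max_lt (by linarith [abs_nonneg (a - b)])
      (by linarith [neg_abs_le (a - b)])⟩, rfl⟩
  rw [Set.not_disjoint_iff]
  exact ⟨_, mem_arc h, max_comm c' c ▸ mem_arc (abs_sub_comm c c' ▸ h)⟩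

theorem not_disjoint_image_add_arc {x β : ℝ} (c : ℝ) (h : nint x < β) :
    ¬ Disjoint ((· + (x : AddCircle (1 : ℝ))) '' arc c β) (arc c β) := by
  have hx : x = (x - round x) + round x := by ring
  rw [image_add_arc, hx, ← add_assoc, arc_add_int]
  exact not_disjoint_arc_of_abs_sub_lt (by simpa [nint] using h)

theorem stmt1_general (α : ℝ) (n N : ℕ) (c β : ℝ)
    (hN₁ : qd α n < (N : ℝ))
    (hdisj : ∀ j k : ℕ, j < N → k < N → j ≠ k →
      Disjoint ((fun x => x + (((j : ℝ) * α : ℝ) : AddCircle (1 : ℝ))) '' arc c β)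
               ((fun x => x + (((k : ℝ) * α : ℝ) : AddCircle (1 : ℝ))) '' arc c β)) :
    β ≤ nint (qd α n * α) := by
  obtain ⟨m, hm⟩ := GenContFract.exists_nat_eq_dens α n
  rw [qd, hm] at hN₁ ⊢
  have hmN : m < N := mod_cast hN₁
  have hm₀ : m ≠ 0 :=
    Nat.one_le_iff_ne_zero.mp (Nat.one_le_cast.mp (hm ▸ GenContFract.one_le_dens α n))
  by_contra! hlt
  have h := hdisj m 0 hmN (by omega) hm₀
  simp only [Nat.cast_zero, zero_mul, AddCircle.coe_zero, add_zero, Set.image_id'] at h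
  exact not_disjoint_image_add_arc c hlt h

theorem stmt1 (α : ℝ) (hα : Irrational α) (n N : ℕ) (c β : ℝ) (hβ : 0 < β)
    (hN₁ : qd α n < (N : ℝ)) (hN₂ : (N : ℝ) ≤ qd α (n + 1))
    (hdisj : ∀ j k : ℕ, j < N → k < N → j ≠ k →
      Disjoint ((fun x => x + (((j : ℝ) * α : ℝ) : AddCircle (1 : ℝ))) '' arc c β)
               ((fun x => x + (((k : ℝ) * α : ℝ) : AddCircle (1 : ℝ))) '' arc c β)) :
    β ≤ nint (qd α n * α) :=
  stmt1_general α n N c β hN₁ hdisj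
end

section
/- If α = (s+√(s²+4))/2 for a positive integer s (i.e., α has constant partial quotients equal to s), then lim_{n→∞} q_{n+1}·‖q_n α‖ = α²/(1+α²) — equivalently, the covering number by one interval is F₁(f_α) = α²/(1+α²). -/
open Filter Topology

/-!
Here `α = s + 1/α`, i.e. `Int.fract α * α = 1`, so `α` is a fixed point of the Gauss map
and every partial quotient of `α` equals `⌊α⌋ = s`. The denominators therefore satisfy
`q (n+2) = s q (n+1) + q n`, a linear recurrence whose characteristic roots are `α` and
`β = -α⁻¹`. This gives `q (n+1) - α q n = β ^ (n+1)` and Binet's formula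
`q n (α - β) = α ^ (n+1) - β ^ (n+1)`. As `q (n+1)` is an integer and `|β| ^ (n+1) < 1/2`
for `n ≥ 1`, we get `‖q n α‖ = α⁻¹ ^ (n+1)`, so
`q (n+1) ‖q n α‖ → α / (α - β) = α² / (1 + α²)`.
-/

section LinearRecurrence

variable {R : Type*} [CommRing R] {q : ℕ → R} {α β : R}

theorem sub_mul_eq_pow_of_linearRecurrence (h0 : q 0 = 1) (h1 : q 1 = α + β)
    (hrec : ∀ n, q (n + 2) = (α + β) * q (n + 1) - α * β * q n) (n : ℕ) :
    q (n + 1) - α * q n = β ^ (n + 1) := by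
  induction n with
  | zero => rw [h1, h0]; ring
  | succ n ih => rw [hrec, pow_succ, ← ih]; ring

theorem mul_sub_eq_pow_sub_pow_of_linearRecurrence (h0 : q 0 = 1) (h1 : q 1 = α + β)
    (hrec : ∀ n, q (n + 2) = (α + β) * q (n + 1) - α * β * q n) (n : ℕ) :
    q n * (α - β) = α ^ (n + 1) - β ^ (n + 1) := by
  induction n with
  | zero => rw [h0]; ring
  | succ n ih =>
    have hstep := sub_mul_eq_pow_of_linearRecurrence h0 h1 hrec n
    linear_combination (α - β) * hstep + α * ih

end LinearRecurrence

theorem tendsto_pow_succ_sub_pow_succ_div_pow {α β : ℝ} (h : |β| < α) :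
    Tendsto (fun n : ℕ => (α ^ (n + 1) - β ^ (n + 1)) / α ^ n) atTop (𝓝 α) := by
  have hα : 0 < α := (abs_nonneg β).trans_lt h
  have hratio : |β / α| < 1 := by
    rwa [abs_div, abs_of_pos hα, div_lt_one hα]
  have hlim : Tendsto (fun n : ℕ => α - β * (β / α) ^ n) atTop (𝓝 (α - β * 0)) :=
    tendsto_const_nhds.sub ((tendsto_pow_atTop_nhds_zero_of_abs_lt_one hratio).const_mul β)
  rw [mul_zero, sub_zero] at hlim
  refine hlim.congr fun n => ?_
  rw [div_pow, eq_div_iff (pow_ne_zero n hα.ne')]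
  field_simp
  ring

theorem nint_eq_abs_sub_of_abs_sub_lt_half {x : ℝ} {m : ℤ} (h : |x - m| < 1 / 2) :
    nint x = |x - m| := by
  have hround : round x = m := by
    rw [round_eq_iff]
    constructor <;> linarith [abs_lt.mp h]
  rw [nint, hround]

namespace GenContFract

variable {K : Type*} [DivisionRing K] [LinearOrder K] [IsStrictOrderedRing K] [FloorRing K] {v : K}

theorem of_s_get?_eq_of_fract_mul_self_eq_one (h : Int.fract v * v = 1) (n : ℕ) :
    (GenContFract.of v).s.get? n = some ⟨1, ⌊v⌋⟩ := by
  have hinv : (Int.fract v)⁻¹ = v := inv_eq_of_mul_eq_one_right h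
  induction n with
  | zero =>
    have hhead := of_s_head (left_ne_zero_of_mul_eq_one h)
    rwa [Stream'.Seq.head, hinv] at hhead
  | succ n ih => rw [of_s_succ, hinv, ih]

theorem of_dens_one_of_fract_mul_self_eq_one (h : Int.fract v * v = 1) :
    (GenContFract.of v).dens 1 = ⌊v⌋ :=
  first_den_eq (of_s_get?_eq_of_fract_mul_self_eq_one h 0)

theorem of_dens_add_two_of_fract_mul_self_eq_one (h : Int.fract v * v = 1) (n : ℕ) :
    (GenContFract.of v).dens (n + 2) =
      ⌊v⌋ * (GenContFract.of v).dens (n + 1) + (GenContFract.of v).dens n := by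
  simpa using dens_recurrence (of_s_get?_eq_of_fract_mul_self_eq_one h (n + 1)) rfl rfl

theorem exists_int_of_dens_eq_of_fract_mul_self_eq_one (h : Int.fract v * v = 1) (n : ℕ) :
    ∃ z : ℤ, (GenContFract.of v).dens n = z := by
  induction n using Nat.twoStepInduction with
  | zero => exact ⟨1, by simp⟩
  | one => exact ⟨⌊v⌋, of_dens_one_of_fract_mul_self_eq_one h⟩
  | more n ih₀ ih₁ =>
    obtain ⟨a, ha⟩ := ih₀
    obtain ⟨b, hb⟩ := ih₁
    refine ⟨⌊v⌋ * b + a, ?_⟩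
    rw [of_dens_add_two_of_fract_mul_self_eq_one h, ha, hb]
    push_cast
    rfl

end GenContFract

section FixedPointOfGaussMap

variable {α : ℝ}

theorem one_lt_of_fract_mul_self_eq_one (h : Int.fract α * α = 1) : 1 < α := by
  have hfract := Int.fract_lt_one α
  have hpos : 0 < Int.fract α := (Int.fract_nonneg α).lt_of_ne (left_ne_zero_of_mul_eq_one h).symm
  nlinarith

theorem floor_eq_sub_inv_of_fract_mul_self_eq_one (h : Int.fract α * α = 1) :
    (⌊α⌋ : ℝ) = α - α⁻¹ := by
  rw [inv_eq_of_mul_eq_one_left h, Int.fract]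
  ring

theorem two_lt_sq_of_fract_mul_self_eq_one (h : Int.fract α * α = 1) : 2 < α ^ 2 := by
  have hα := one_lt_of_fract_mul_self_eq_one h
  have hfloor : (1 : ℝ) ≤ ⌊α⌋ := by
    exact_mod_cast Int.le_floor.mpr (by exact_mod_cast hα.le)
  rw [floor_eq_sub_inv_of_fract_mul_self_eq_one h] at hfloor
  have hinv : α * α⁻¹ = 1 := mul_inv_cancel₀ (by positivity)
  nlinarith

theorem qd_one_of_fract_mul_self_eq_one (h : Int.fract α * α = 1) : qd α 1 = α + -α⁻¹ := by
  rw [qd, GenContFract.of_dens_one_of_fract_mul_self_eq_one h,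
    floor_eq_sub_inv_of_fract_mul_self_eq_one h, sub_eq_add_neg]

theorem qd_add_two_of_fract_mul_self_eq_one (h : Int.fract α * α = 1) (n : ℕ) :
    qd α (n + 2) = (α + -α⁻¹) * qd α (n + 1) - α * -α⁻¹ * qd α n := by
  have hα := one_lt_of_fract_mul_self_eq_one h
  have hinv : α * α⁻¹ = 1 := mul_inv_cancel₀ (by positivity)
  rw [qd, GenContFract.of_dens_add_two_of_fract_mul_self_eq_one h,
    floor_eq_sub_inv_of_fract_mul_self_eq_one h, mul_neg, hinv, qd, qd]
  ring

theorem qd_succ_sub_mul_qd_of_fract_mul_self_eq_one (h : Int.fract α * α = 1) (n : ℕ) :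
    qd α (n + 1) - α * qd α n = (-α⁻¹) ^ (n + 1) :=
  sub_mul_eq_pow_of_linearRecurrence GenContFract.zeroth_den_eq_one
    (qd_one_of_fract_mul_self_eq_one h) (qd_add_two_of_fract_mul_self_eq_one h) n

theorem qd_mul_add_inv_of_fract_mul_self_eq_one (h : Int.fract α * α = 1) (n : ℕ) :
    qd α n * (α + α⁻¹) = α ^ (n + 1) - (-α⁻¹) ^ (n + 1) := by
  rw [← sub_neg_eq_add]
  exact mul_sub_eq_pow_sub_pow_of_linearRecurrence GenContFract.zeroth_den_eq_one
    (qd_one_of_fract_mul_self_eq_one h) (qd_add_two_of_fract_mul_self_eq_one h) n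

theorem nint_qd_mul_of_fract_mul_self_eq_one (h : Int.fract α * α = 1) {n : ℕ} (hn : 1 ≤ n) :
    nint (qd α n * α) = α⁻¹ ^ (n + 1) := by
  have hα := one_lt_of_fract_mul_self_eq_one h
  obtain ⟨m, hm⟩ := GenContFract.exists_int_of_dens_eq_of_fract_mul_self_eq_one h (n + 1)
  replace hm : qd α (n + 1) = m := hm
  have hdist : |qd α n * α - m| = α⁻¹ ^ (n + 1) := by
    rw [← hm, ← neg_sub, abs_neg, mul_comm,
      qd_succ_sub_mul_qd_of_fract_mul_self_eq_one h, abs_pow, abs_neg, abs_inv,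
      abs_of_pos (zero_lt_one.trans hα)]
  have hsmall : α⁻¹ ^ (n + 1) < 1 / 2 :=
    calc α⁻¹ ^ (n + 1) ≤ α⁻¹ ^ 2 :=
          pow_le_pow_of_le_one (by positivity) (inv_le_one_of_one_le₀ hα.le) (by omega)
      _ < 1 / 2 := by
          rw [inv_pow, one_div]
          exact inv_strictAnti₀ two_pos (two_lt_sq_of_fract_mul_self_eq_one h)
  rw [nint_eq_abs_sub_of_abs_sub_lt_half (hdist ▸ hsmall), hdist]

theorem tendsto_qd_succ_mul_nint_qd_mul_of_fract_mul_self_eq_one (h : Int.fract α * α = 1) :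
    Tendsto (fun n : ℕ => qd α (n + 1) * nint (qd α n * α)) atTop
      (𝓝 (α ^ 2 / (1 + α ^ 2))) := by
  have hα := one_lt_of_fract_mul_self_eq_one h
  have hβ : |-α⁻¹| < α := by
    rw [abs_neg, abs_inv, abs_of_pos (zero_lt_one.trans hα)]
    exact (inv_lt_one_of_one_lt₀ hα).trans hα
  have hlim := ((tendsto_pow_succ_sub_pow_succ_div_pow hβ).comp
    (tendsto_add_atTop_nat 1)).div_const (α + α⁻¹)
  have hval : α / (α + α⁻¹) = α ^ 2 / (1 + α ^ 2) := by
    field_simp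
    ring
  rw [hval] at hlim
  refine hlim.congr' ((eventually_ge_atTop 1).mono fun n hn => ?_)
  simp only [Function.comp_apply]
  rw [nint_qd_mul_of_fract_mul_self_eq_one h hn, ← qd_mul_add_inv_of_fract_mul_self_eq_one h,
    inv_pow]
  field_simp

end FixedPointOfGaussMap

theorem fract_mul_self_eq_one_of_sq_eq {s : ℕ} {α : ℝ} (hs : 1 ≤ s)
    (hsq : α ^ 2 = s * α + 1) (hα : 0 < α) : Int.fract α * α = 1 := by
  have hs' : (1 : ℝ) ≤ s := by exact_mod_cast hs
  have hfloor : ⌊α⌋ = s := by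
    rw [Int.floor_eq_iff]
    push_cast
    constructor <;> nlinarith
  rw [Int.fract, hfloor]
  push_cast
  linear_combination hsq

theorem stmt6 (s : ℕ) (hs : 1 ≤ s) (α : ℝ)
    (hα : α = ((s : ℝ) + Real.sqrt ((s : ℝ) ^ 2 + 4)) / 2) :
    Tendsto (fun n : ℕ => qd α (n + 1) * nint (qd α n * α)) atTop
      (𝓝 (α ^ 2 / (1 + α ^ 2))) := by
  have hsqrt := Real.sq_sqrt (by positivity : (0 : ℝ) ≤ (s : ℝ) ^ 2 + 4)
  refine tendsto_qd_succ_mul_nint_qd_mul_of_fract_mul_self_eq_one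
    (fract_mul_self_eq_one_of_sq_eq hs ?_ ?_)
  · rw [hα]
    linear_combination hsqrt / 4
  · rw [hα]
    positivity
end

section
/- Let α be irrational with convergents q_n. For any interval B = [c, c+β) on the torus with 0 < β ≤ ‖q_n α‖ and any N ≤ q_{n+1}, the translates B, B+α, ..., B+(N−1)α (mod 1) are pairwise disjoint. -/
/-!
If the translates of `[c, c + β)` by `jα` and `kα`, `k < j`, met on the torus, then
`‖(j - k)α‖ < β`. But `0 < j - k < q_{n+1}`, and by the best approximation property of the
convergents `‖mα‖ ≥ ‖q_n α‖ ≥ β` for every such `m`. The best approximation property holds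
because `(q_n, p_n)` and `(q_{n+1}, p_{n+1})` form a basis of `ℤ²` whose approximation errors
`q_i α - p_i` have opposite signs.
-/

open Filter Topology

lemma abs_le_abs_add_of_mul_nonneg {u w : ℝ} (h : 0 ≤ u * w) : |u| ≤ |u + w| := by
  rw [(abs_add_eq_add_abs_iff u w).mpr (mul_nonneg_iff.mp h)]
  exact le_add_of_nonneg_right (abs_nonneg w)

lemma Int.mul_neg_of_add_mul_mem_Ioo {b b' x y : ℤ} (hb : 0 ≤ b) (hy : y ≠ 0)
    (hpos : 0 < x * b + y * b') (hlt : x * b + y * b' < b') : x * y < 0 := by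
  rcases lt_trichotomy x 0 with hx | rfl | hx <;> rcases hy.lt_or_gt with hy | hy
  · nlinarith
  · exact mul_neg_of_neg_of_pos hx hy
  · nlinarith
  · nlinarith
  · exact mul_neg_of_pos_of_neg hx hy
  · nlinarith

/-- `(m, p)` is an integer combination `x (b, a) + y (b', a')`, and `0 < m < b'` forces `x ≠ 0`
and `x y ≤ 0`, so the two error terms `x (bα - a)` and `y (b'α - a')` do not cancel. -/
theorem abs_mul_sub_le_of_isUnit_det {α : ℝ} {a b a' b' : ℤ} (hdet : IsUnit (a * b' - b * a'))
    (hb : 0 ≤ b) (hsign : (b * α - a) * (b' * α - a') < 0) {m p : ℤ} (hm : 0 < m) (hmb' : m < b') :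
    |b * α - a| ≤ |m * α - p| := by
  set d := a * b' - b * a'
  have hd : d * d = 1 := Int.isUnit_mul_self hdet
  set x := d * (p * b' - m * a')
  set y := d * (m * a - p * b)
  have hm_eq : x * b + y * b' = m := by linear_combination m * hd
  have hp_eq : x * a + y * a' = p := by linear_combination p * hd
  have hcomb : (m : ℝ) * α - p = x * (b * α - a) + y * (b' * α - a') := by
    rw [← hm_eq, ← hp_eq]; push_cast; ring
  obtain ⟨hx, hxy⟩ : x ≠ 0 ∧ x * y ≤ 0 := by
    by_cases hy : y = 0
    · refine ⟨fun hx => ?_, by simp [hy]⟩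
      simp only [hx, hy, zero_mul, add_zero] at hm_eq
      omega
    · have := Int.mul_neg_of_add_mul_mem_Ioo hb hy (hm_eq ▸ hm) (hm_eq ▸ hmb')
      exact ⟨left_ne_zero_of_mul this.ne, this.le⟩
  have hsame : 0 ≤ (x * (b * α - a)) * (y * (b' * α - a')) := by
    have : ((x * y : ℤ) : ℝ) ≤ 0 := by exact_mod_cast hxy
    rw [show (x * (b * α - a)) * (y * (b' * α - a')) = ((x * y : ℤ) : ℝ) *
      ((b * α - a) * (b' * α - a')) by push_cast; ring]
    exact mul_nonneg_of_nonpos_of_nonpos this hsign.le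
  have hx1 : (1 : ℝ) ≤ |(x : ℝ)| := by exact_mod_cast Int.one_le_abs hx
  calc |b * α - a| ≤ |(x : ℝ)| * |b * α - a| := le_mul_of_one_le_left (abs_nonneg _) hx1
    _ = |x * (b * α - a)| := (abs_mul _ _).symm
    _ ≤ |m * α - p| := hcomb ▸ abs_le_abs_add_of_mul_nonneg hsame

lemma disjoint_image_add_arc_of_le_nint {c β u v : ℝ} (h : β ≤ nint (u - v)) :
    Disjoint ((fun x => x + ((u : ℝ) : AddCircle (1 : ℝ))) '' arc c β)
      ((fun x => x + ((v : ℝ) : AddCircle (1 : ℝ))) '' arc c β) := by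
  simp only [Set.disjoint_left, arc, Set.image_image, Set.mem_image, Set.mem_Ico]
  rintro _ ⟨s, hs, rfl⟩ ⟨t, ht, hst⟩
  rw [← AddCircle.coe_add, ← AddCircle.coe_add, QuotientAddGroup.eq_iff_sub_mem,
    AddSubgroup.mem_zmultiples_iff] at hst
  obtain ⟨z, hz⟩ := hst
  rw [zsmul_eq_mul, mul_one] at hz
  have hclose : |(u - v) - (-z : ℤ)| < β := by
    rw [abs_lt]; push_cast; constructor <;> linarith
  exact (h.trans (round_le _ _)).not_gt hclose

namespace GenContFract

variable {α : ℝ}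

lemma of_not_terminatedAt_of_irrational (hα : Irrational α) (n : ℕ) :
    ¬(GenContFract.of α).TerminatedAt n := fun h => by
  obtain ⟨q, hq⟩ := (terminates_iff_rat α).mp ⟨n, h⟩
  exact hα ⟨q, hq.symm⟩

lemma of_dens_pos_of_irrational (hα : Irrational α) (n : ℕ) :
    0 < (GenContFract.of α).dens n := by
  have hfib := succ_nth_fib_le_of_nth_den (v := α) (n := n)
    (Or.inr (of_not_terminatedAt_of_irrational hα _))
  exact lt_of_lt_of_le (by exact_mod_cast Nat.fib_pos.mpr n.succ_pos) hfib

lemma of_exists_int_nums_dens_of_irrational (hα : Irrational α) (n : ℕ) :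
    ∃ a b : ℤ, (GenContFract.of α).nums n = a ∧ (GenContFract.of α).dens n = b := by
  have partDen (m : ℕ) : ∃ gp : Pair ℝ,
      (GenContFract.of α).s.get? m = some gp ∧ gp.a = 1 ∧ ∃ z : ℤ, gp.b = z := by
    obtain ⟨gp, hgp⟩ := Option.ne_none_iff_exists'.mp (of_not_terminatedAt_of_irrational hα m)
    exact ⟨gp, hgp, of_partNum_eq_one_and_exists_int_partDen_eq hgp⟩
  induction n using Nat.twoStepInduction with
  | zero => exact ⟨⌊α⌋, 1, by rw [zeroth_num_eq_h, of_h_eq_floor], by simp⟩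
  | one =>
    obtain ⟨gp, hs, ha, z, hz⟩ := partDen 0
    refine ⟨z * ⌊α⌋ + 1, z, ?_, by rw [first_den_eq hs, hz]⟩
    rw [first_num_eq hs, ha, hz, of_h_eq_floor]; push_cast; ring
  | more n ih ih' =>
    obtain ⟨a, b, ha, hb⟩ := ih
    obtain ⟨a', b', ha', hb'⟩ := ih'
    obtain ⟨gp, hs, hgpa, z, hz⟩ := partDen (n + 1)
    refine ⟨z * a' + a, z * b' + b, ?_, ?_⟩
    · rw [nums_recurrence hs ha ha', hgpa, hz]; push_cast; ring
    · rw [dens_recurrence hs hb hb', hgpa, hz]; push_cast; ring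

lemma neg_one_pow_mul_sub_of_convs_pos (hα : Irrational α) (n : ℕ) :
    0 < (-1 : ℝ) ^ n * (α - (GenContFract.of α).convs n) := by
  have hstream : IntFractPair.stream α (n + 1) ≠ none := fun h =>
    of_not_terminatedAt_of_irrational hα n
      (of_terminatedAt_n_iff_succ_nth_intFractPair_stream_eq_none.mpr h)
  obtain ⟨ifp, hifp⟩ := Option.ne_none_iff_exists'.mp hstream
  obtain ⟨ifp, hst, hfr, -⟩ := IntFractPair.succ_nth_stream_eq_some_iff.mp hifp
  have hB : 0 < ((GenContFract.of α).contsAux (n + 1)).b := by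
    rw [← nth_cont_eq_succ_nth_contAux, ← den_eq_conts_b]
    exact of_dens_pos_of_irrational hα n
  have hpB : 0 ≤ ((GenContFract.of α).contsAux n).b := zero_le_of_contsAux_b
  have hfr' : 0 < ifp.fr := (IntFractPair.nth_stream_fr_nonneg hst).lt_of_ne (Ne.symm hfr)
  rw [sub_convs_eq hst, if_neg hfr, ← mul_div_assoc, ← pow_add, Even.neg_one_pow ⟨n, rfl⟩]
  positivity

lemma of_dens_mul_sub_nums_mul_succ_neg (hα : Irrational α) (n : ℕ) :
    ((GenContFract.of α).dens n * α - (GenContFract.of α).nums n) *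
      ((GenContFract.of α).dens (n + 1) * α - (GenContFract.of α).nums (n + 1)) < 0 := by
  have herr (m : ℕ) : (GenContFract.of α).dens m * α - (GenContFract.of α).nums m =
      (GenContFract.of α).dens m * (α - (GenContFract.of α).convs m) := by
    have := (of_dens_pos_of_irrational hα m).ne'
    rw [conv_eq_num_div_den]; field_simp
  have hsign : (-1 : ℝ) ^ n * (-1) ^ (n + 1) = -1 := by
    rw [← pow_add]; exact Odd.neg_one_pow ⟨n, by ring⟩
  have hpos := mul_pos (neg_one_pow_mul_sub_of_convs_pos hα n)
    (neg_one_pow_mul_sub_of_convs_pos hα (n + 1))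
  have hdens := mul_pos (of_dens_pos_of_irrational hα n) (of_dens_pos_of_irrational hα (n + 1))
  rw [herr, herr]
  nlinarith

theorem nint_of_dens_mul_le_nint_mul (hα : Irrational α) (n : ℕ) {m : ℕ} (hm : 0 < m)
    (hm' : (m : ℝ) < (GenContFract.of α).dens (n + 1)) :
    nint ((GenContFract.of α).dens n * α) ≤ nint (m * α) := by
  obtain ⟨a, b, ha, hb⟩ := of_exists_int_nums_dens_of_irrational hα n
  obtain ⟨a', b', ha', hb'⟩ := of_exists_int_nums_dens_of_irrational hα (n + 1)
  have hdet : (GenContFract.of α).nums n * (GenContFract.of α).dens (n + 1) -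
      (GenContFract.of α).dens n * (GenContFract.of α).nums (n + 1) = (-1) ^ (n + 1) :=
    (SimpContFract.of α).determinant (of_not_terminatedAt_of_irrational hα n)
  have hsign := of_dens_mul_sub_nums_mul_succ_neg hα n
  rw [ha, hb, ha', hb'] at hdet hsign
  have hdet' : IsUnit (a * b' - b * a') := by
    rw [show a * b' - b * a' = (-1) ^ (n + 1) by exact_mod_cast hdet]
    exact isUnit_neg_one.pow _
  have hb0 : 0 ≤ b := by
    have := zero_le_of_den (v := α) (n := n); rw [hb] at this; exact_mod_cast this
  have hmb' : (m : ℤ) < b' := by rw [hb'] at hm'; exact_mod_cast hm'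
  calc nint ((GenContFract.of α).dens n * α) ≤ |(b : ℝ) * α - a| := by
        rw [hb]; exact round_le ((b : ℝ) * α) a
    _ ≤ |((m : ℤ) : ℝ) * α - round ((m : ℝ) * α)| :=
        abs_mul_sub_le_of_isUnit_det hdet' hb0 hsign (by exact_mod_cast hm) hmb'
    _ = nint (m * α) := by rw [Int.cast_natCast]; rfl

end GenContFract

theorem stmt15_general (α : ℝ) (hα : Irrational α) (n N : ℕ) (c β : ℝ)
    (hβ' : β ≤ nint (qd α n * α)) (hN : (N : ℝ) ≤ qd α (n + 1)) :
    ∀ j k : ℕ, j < N → k < N → j ≠ k →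
      Disjoint ((fun x => x + (((j : ℝ) * α : ℝ) : AddCircle (1 : ℝ))) '' arc c β)
               ((fun x => x + (((k : ℝ) * α : ℝ) : AddCircle (1 : ℝ))) '' arc c β) := by
  suffices h : ∀ j k : ℕ, k < j → j < N →
      Disjoint ((fun x => x + (((j : ℝ) * α : ℝ) : AddCircle (1 : ℝ))) '' arc c β)
               ((fun x => x + (((k : ℝ) * α : ℝ) : AddCircle (1 : ℝ))) '' arc c β) by
    intro j k hj hk hne
    rcases hne.lt_or_gt with hjk | hkj
    · exact (h k j hjk hk).symm
    · exact h j k hkj hj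
  intro j k hkj hjN
  apply disjoint_image_add_arc_of_le_nint
  have hsub : (j : ℝ) * α - k * α = ((j - k : ℕ) : ℝ) * α := by
    rw [Nat.cast_sub hkj.le]; ring
  have hlt : ((j - k : ℕ) : ℝ) < qd α (n + 1) :=
    lt_of_lt_of_le (by exact_mod_cast (Nat.sub_le j k).trans_lt hjN) hN
  rw [hsub]
  exact hβ'.trans (GenContFract.nint_of_dens_mul_le_nint_mul hα n (Nat.sub_pos_of_lt hkj) hlt)

theorem stmt15 (α : ℝ) (hα : Irrational α) (n N : ℕ) (c β : ℝ)
    (hβ : 0 < β) (hβ' : β ≤ nint (qd α n * α)) (hN : (N : ℝ) ≤ qd α (n + 1)) :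
    ∀ j k : ℕ, j < N → k < N → j ≠ k →
      Disjoint ((fun x => x + (((j : ℝ) * α : ℝ) : AddCircle (1 : ℝ))) '' arc c β)
               ((fun x => x + (((k : ℝ) * α : ℝ) : AddCircle (1 : ℝ))) '' arc c β) :=
  stmt15_general α hα n N c β hβ' hN
end
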